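/- There exists a finite constant C such that for every λ > 0, ∫₀² λ/( sin²(2πs) + (λ + sin²(πs))² ) ds ≤ C. -/

import Mathlib

open MeasureTheory Real

/-!
Near each half-integer `n / 2` the asymmetry term alone controls the denominator: by Jordan's
inequality `sin² (2πs) ≥ 16 (s - n/2)²` whenever `|s - n/2| ≤ 1/4`, and `(λ + sin² (πs))² ≥ λ²`.
So the integrand is dominated by the Lorentzian `λ / (16 (s - n/2)² + λ²)`, whose integral over
the whole line is `π/4` for every `λ`. Five such bumps, `n = 0, …, 4`, cover `[0, 2]`.
-/

lemma abs_sin_add_int_mul_pi (x : ℝ) (n : ℤ) : |sin (x + n * π)| = |sin x| := by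
  rw [sin_add_int_mul_pi, abs_mul, abs_neg_one_zpow, one_mul]

lemma four_mul_abs_sub_round_le_abs_sin (s : ℝ) :
    4 * |s - round (2 * s) / 2| ≤ |sin (2 * π * s)| := by
  set u := s - round (2 * s) / 2
  have hu : |u| ≤ 1 / 4 := by
    have := abs_sub_round (2 * s)
    rw [show u = (2 * s - round (2 * s)) / 2 by ring, abs_div, abs_two]
    linarith
  have hjordan : 2 / π * |2 * π * u| ≤ |sin (2 * π * u)| := by
    refine mul_abs_le_abs_sin ?_
    rw [abs_mul, abs_of_pos (by positivity : (0 : ℝ) < 2 * π)]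
    nlinarith [pi_pos]
  rw [abs_mul, abs_of_pos (by positivity : (0 : ℝ) < 2 * π)] at hjordan
  calc 4 * |u| = 2 / π * (2 * π * |u|) := by field_simp; ring
    _ ≤ |sin (2 * π * u)| := hjordan
    _ = |sin (2 * π * s)| := by
      rw [← abs_sin_add_int_mul_pi _ (round (2 * s))]
      congr 2
      ring

lemma integral_lorentzian_le {lam k : ℝ} (hlam : 0 < lam) (hk : 0 < k) (c a b : ℝ) :
    ∫ s in a..b, lam / ((k * (s - c)) ^ 2 + lam ^ 2) ≤ π / k := by
  have hderiv : ∀ s ∈ Set.uIcc a b, HasDerivAt (fun s => arctan (k * (s - c) / lam) / k)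
      (lam / ((k * (s - c)) ^ 2 + lam ^ 2)) s := by
    intro s _
    have hlin : HasDerivAt (fun s => k * (s - c) / lam) (k * 1 / lam) s :=
      (((hasDerivAt_id s).sub_const c).const_mul k).div_const lam
    refine (((hasDerivAt_arctan _).comp s hlin).div_const k).congr_deriv ?_
    field_simp
    ring
  have hint : IntervalIntegrable (fun s => lam / ((k * (s - c)) ^ 2 + lam ^ 2)) volume a b :=
    (continuous_const.div (by fun_prop) fun s => by positivity).intervalIntegrable a b
  rw [intervalIntegral.integral_eq_sub_of_hasDerivAt hderiv hint, ← sub_div]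
  gcongr
  linarith [arctan_lt_pi_div_two (k * (b - c) / lam), neg_pi_div_two_lt_arctan (k * (a - c) / lam)]

lemma integrand_le_lorentzian {lam : ℝ} (hlam : 0 < lam) (s : ℝ) :
    lam / (sin (2 * π * s) ^ 2 + (lam + sin (π * s) ^ 2) ^ 2)
      ≤ lam / ((4 * (s - round (2 * s) / 2)) ^ 2 + lam ^ 2) := by
  have hsin : (4 * (s - round (2 * s) / 2)) ^ 2 ≤ sin (2 * π * s) ^ 2 := by
    rw [sq_le_sq, abs_mul, abs_of_pos (four_pos : (0 : ℝ) < 4)]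
    exact four_mul_abs_sub_round_le_abs_sin s
  have hlam_sq : lam ^ 2 ≤ (lam + sin (π * s) ^ 2) ^ 2 := by
    gcongr
    exact le_add_of_nonneg_right (sq_nonneg _)
  gcongr

lemma round_two_mul_mem_Icc {s : ℝ} (hs : s ∈ Set.Icc (0 : ℝ) 2) :
    round (2 * s) ∈ Finset.Icc (0 : ℤ) 4 := by
  obtain ⟨hlo, hhi⟩ := abs_le.mp (abs_sub_round (2 * s))
  have hlo' : (-1 : ℤ) < round (2 * s) := by
    exact_mod_cast (by linarith [hs.1] : (-1 : ℝ) < round (2 * s))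
  have hhi' : round (2 * s) < 5 := by
    exact_mod_cast (by linarith [hs.2] : (round (2 * s) : ℝ) < 5)
  rw [Finset.mem_Icc]
  omega

theorem stmt_12 :
    ∃ C : ℝ, ∀ lam : ℝ, 0 < lam →
      ∫ s in Set.Icc (0 : ℝ) 2,
          lam / (Real.sin (2 * π * s) ^ 2 + (lam + Real.sin (π * s) ^ 2) ^ 2) ≤ C := by
  refine ⟨5 * (π / 4), fun lam hlam => ?_⟩
  have hcont : Continuous fun s => lam / (sin (2 * π * s) ^ 2 + (lam + sin (π * s) ^ 2) ^ 2) :=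
    continuous_const.div (by fun_prop) fun s => by positivity
  have hlor (n : ℤ) : Continuous fun s : ℝ => lam / ((4 * (s - n / 2)) ^ 2 + lam ^ 2) :=
    continuous_const.div (by fun_prop) fun s => by positivity
  calc ∫ s in Set.Icc (0 : ℝ) 2, lam / (sin (2 * π * s) ^ 2 + (lam + sin (π * s) ^ 2) ^ 2)
      ≤ ∫ s in Set.Icc (0 : ℝ) 2, ∑ n ∈ Finset.Icc (0 : ℤ) 4,
          lam / ((4 * (s - n / 2)) ^ 2 + lam ^ 2) := by
        refine setIntegral_mono_on hcont.integrableOn_Icc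
          ((continuous_finsetSum _ fun n _ => hlor n).integrableOn_Icc) measurableSet_Icc
          fun s hs => (integrand_le_lorentzian hlam s).trans ?_
        exact Finset.single_le_sum (f := fun n : ℤ => lam / ((4 * (s - n / 2)) ^ 2 + lam ^ 2))
          (fun n _ => by positivity) (round_two_mul_mem_Icc hs)
    _ = ∑ n ∈ Finset.Icc (0 : ℤ) 4, ∫ s in (0 : ℝ)..2, lam / ((4 * (s - n / 2)) ^ 2 + lam ^ 2) := by
        rw [integral_finsetSum _ fun n _ => (hlor n).integrableOn_Icc]
        simp only [integral_Icc_eq_integral_Ioc, intervalIntegral.integral_of_le zero_le_two]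
    _ ≤ ∑ _n ∈ Finset.Icc (0 : ℤ) 4, π / 4 :=
        Finset.sum_le_sum fun n _ => integral_lorentzian_le hlam four_pos _ _ _
    _ = 5 * (π / 4) := by simp
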